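/- Assign each of N vertices independently and uniformly at random to one of m machines (i.e., sample a function f from a finite vertex set V of cardinality N to Fin m according to the product of uniform distributions). If N ≥ 1 and m ≥ 1, then the probability that every machine i receives strictly fewer than 2·N/m vertices (i.e., for all i, the cardinality of the preimage f⁻¹{i} is less than 2·N/m) is strictly greater than 1 − m²/N. -/
import Mathlib
open Finset MeasureTheory ENNReal
-- key cardinality lemma
lemma aux_card (V : Type*) [Fintype V] [DecidableEq V] (m : ℕ) [NeZero m] (i : Fin m)
    (s : Finset V) :
    (Finset.univ.filter fun f : V → Fin m => ∀ v ∈ s, f v = i).card * m ^ s.card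
      = m ^ Fintype.card V := by
  have e : {f : V → Fin m // ∀ v ∈ s, f v = i} ≃ ({x : V // x ∉ s} → Fin m) :=
    { toFun := fun f x => f.1 x
      invFun := fun g => ⟨fun x => if h : x ∈ s then i else g ⟨x, h⟩, by
        intro v hv; simp [hv]⟩
      left_inv := by
        rintro ⟨f, hf⟩; ext x; by_cases h : x ∈ s <;> simp [h, hf x]
      right_inv := by
        intro g; ext ⟨x, hx⟩; simp [hx] }
  have h1 : (Finset.univ.filter fun f : V → Fin m => ∀ v ∈ s, f v = i).card
      = m ^ Fintype.card {x : V // x ∉ s} := by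
    rw [← Fintype.card_subtype, Fintype.card_congr e, Fintype.card_fun, Fintype.card_fin]
  have h2 : Fintype.card {x : V // x ∉ s} = sᶜ.card := by
    simp [Fintype.card_subtype, Finset.compl_eq_univ_sdiff, Finset.filter_not]
  rw [h1, h2, ← pow_add, Finset.card_compl_add_card]
lemma aux_one (V : Type*) [Fintype V] [DecidableEq V] (m : ℕ) [NeZero m] (i : Fin m) (v : V) :
    (Finset.univ.filter fun f : V → Fin m => f v = i).card * m = m ^ Fintype.card V := by
  have := aux_card V m i {v}
  simpa using this

lemma aux_two (V : Type*) [Fintype V] [DecidableEq V] (m : ℕ) [NeZero m] (i : Fin m) (v w : V)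
    (hvw : v ≠ w) :
    (Finset.univ.filter fun f : V → Fin m => f v = i ∧ f w = i).card * m ^ 2
      = m ^ Fintype.card V := by
  have := aux_card V m i {v, w}
  rw [Finset.card_insert_of_notMem (by simpa using hvw), Finset.card_singleton] at this
  rw [← this]
  congr 2
  apply Finset.filter_congr
  intro f _
  simp [forall_eq_or_imp, and_comm]

-- first moment
lemma aux_E1 (V : Type*) [Fintype V] [DecidableEq V] (m : ℕ) [NeZero m] (i : Fin m) :
    (∑ f : V → Fin m, (Finset.univ.filter fun v => f v = i).card) * m
      = Fintype.card V * m ^ Fintype.card V := by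
  have h : ∑ f : V → Fin m, (Finset.univ.filter fun v => f v = i).card
      = ∑ v : V, (Finset.univ.filter fun f : V → Fin m => f v = i).card := by
    simp only [Finset.card_filter]
    rw [Finset.sum_comm]
  rw [h, Finset.sum_mul]
  rw [Finset.sum_congr rfl fun v _ => aux_one V m i v]
  simp [Finset.card_univ, mul_comm]
lemma aux_E2 (V : Type*) [Fintype V] [DecidableEq V] (m : ℕ) [NeZero m] (i : Fin m) :
    (∑ f : V → Fin m, ((Finset.univ.filter fun v => f v = i).card) ^ 2) * m ^ 2
      = Fintype.card V * m * m ^ Fintype.card V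
        + Fintype.card V * (Fintype.card V - 1) * m ^ Fintype.card V := by
  have hc : ∀ f : V → Fin m, ((Finset.univ.filter fun v => f v = i).card) ^ 2
      = ∑ v : V, ∑ w : V, if f v = i ∧ f w = i then 1 else 0 := by
    intro f
    rw [Finset.card_filter, sq, Finset.sum_mul_sum]
    refine Finset.sum_congr rfl fun v _ => Finset.sum_congr rfl fun w _ => ?_
    by_cases h1 : f v = i <;> by_cases h2 : f w = i <;> simp [h1, h2]
  have h : ∑ f : V → Fin m, ((Finset.univ.filter fun v => f v = i).card) ^ 2
      = ∑ v : V, ∑ w : V, (Finset.univ.filter fun f : V → Fin m => f v = i ∧ f w = i).card := by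
    simp only [hc]
    rw [Finset.sum_comm]
    refine Finset.sum_congr rfl fun v _ => ?_
    rw [Finset.sum_comm]
    refine Finset.sum_congr rfl fun w _ => ?_
    rw [Finset.card_filter]
  rw [h, Finset.sum_mul]
  have hline : ∀ v : V,
      (∑ w : V, (Finset.univ.filter fun f : V → Fin m => f v = i ∧ f w = i).card) * m ^ 2
      = m * m ^ Fintype.card V + (Fintype.card V - 1) * m ^ Fintype.card V := by
    intro v
    rw [← Finset.add_sum_erase _ _ (Finset.mem_univ v), add_mul, Finset.sum_mul]
    congr 1
    · have : (Finset.univ.filter fun f : V → Fin m => f v = i ∧ f v = i)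
          = Finset.univ.filter fun f : V → Fin m => f v = i := by
        apply Finset.filter_congr; intro f _; simp
      rw [this, sq, ← mul_assoc, aux_one V m i v, mul_comm]
    · rw [Finset.sum_congr rfl fun w hw => aux_two V m i v w
        (by exact fun h => (Finset.mem_erase.mp hw).1 h.symm)]
      rw [Finset.sum_const, Finset.card_erase_of_mem (Finset.mem_univ v), Finset.card_univ,
        smul_eq_mul]
  rw [Finset.sum_congr rfl fun v _ => hline v, Finset.sum_const, Finset.card_univ, smul_eq_mul,
    mul_add, ← mul_assoc, ← mul_assoc]
lemma aux_meas (V : Type*) [Fintype V] [DecidableEq V] (m : ℕ) [NeZero m]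
    (s : Finset (V → Fin m)) :
    (Measure.pi fun _ : V => (PMF.uniformOfFintype (Fin m)).toMeasure) (s : Set (V → Fin m))
      = s.card * ((m : ℝ≥0∞)⁻¹) ^ Fintype.card V := by
  have hsing : ∀ f : V → Fin m,
      (Measure.pi fun _ : V => (PMF.uniformOfFintype (Fin m)).toMeasure) {f}
        = ((m : ℝ≥0∞)⁻¹) ^ Fintype.card V := by
    intro f
    have : ({f} : Set (V → Fin m)) = Set.pi Set.univ fun v => {f v} := by
      ext g; simp [funext_iff, eq_comm]
    rw [this, Measure.pi_pi]
    have : ∀ v : V, (PMF.uniformOfFintype (Fin m)).toMeasure {f v} = (m : ℝ≥0∞)⁻¹ := by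
      intro v
      rw [PMF.toMeasure_apply_singleton _ _ (measurableSet_singleton _),
        PMF.uniformOfFintype_apply, Fintype.card_fin]
    simp [this, Finset.card_univ]
  have : (↑s : Set (V → Fin m)) = ⋃ f ∈ s, {f} := by ext g; simp
  rw [this, measure_biUnion_finset ?_ ?_]
  · simp [hsing, Finset.sum_const]
  · intro x _ y _ hxy
    simp [Function.onFun, Set.disjoint_singleton, hxy]
  · intro f _
    exact measurableSet_singleton _

/-- Lemma 1 of the paper. -/
theorem stmt_0 (V : Type*) [Fintype V] [DecidableEq V] (N m : ℕ) [NeZero m]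
    (hN : 1 ≤ N) (hV : Fintype.card V = N) :
    ((Measure.pi fun _ : V => (PMF.uniformOfFintype (Fin m)).toMeasure)
        {f : V → Fin m | ∀ i : Fin m,
          ((Finset.univ.filter fun v => f v = i).card : ℝ) < 2 * N / m}).toReal
      > 1 - (m : ℝ) ^ 2 / N := by
  classical
  have hm0 : (0:ℝ) < m := by exact_mod_cast Nat.pos_of_ne_zero (NeZero.ne m)
  have hN0 : (0:ℝ) < N := by exact_mod_cast hN
  have hpow : (0:ℝ) < (m:ℝ) ^ N := pow_pos hm0 N
  set P : (V → Fin m) → Prop :=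
    fun f => ∀ i : Fin m, ((Finset.univ.filter fun v => f v = i).card : ℝ) < 2 * N / m with hP
  set TG : Finset (V → Fin m) := Finset.univ.filter P with hTG
  set T : Finset (V → Fin m) := Finset.univ.filter fun f => ¬ P f with hT
  -- measure computation
  have hset : {f : V → Fin m | ∀ i : Fin m,
      ((Finset.univ.filter fun v => f v = i).card : ℝ) < 2 * N / m}
      = (TG : Set (V → Fin m)) := by
    ext f; simp [hTG, hP]
  rw [hset, aux_meas, hV, ENNReal.toReal_mul, ENNReal.toReal_pow, ENNReal.toReal_inv,
    ENNReal.toReal_natCast, ENNReal.toReal_natCast, inv_pow, ← div_eq_mul_inv]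
  -- cardinality of the whole space
  have hcard : Fintype.card (V → Fin m) = m ^ N := by
    rw [Fintype.card_fun, Fintype.card_fin, hV]
  -- per-machine Chebyshev bound
  have hTi : ∀ i : Fin m,
      ((Finset.univ.filter fun f : V → Fin m =>
        ¬ ((Finset.univ.filter fun v => f v = i).card : ℝ) < 2 * N / m).card : ℝ) * N ^ 2
      ≤ N * (m:ℝ) ^ (N+1) - N * (m:ℝ) ^ N := by
    intro i
    set c : (V → Fin m) → ℕ := fun f => (Finset.univ.filter fun v => f v = i).card with hc
    have hA : (∑ f : V → Fin m, (c f : ℝ)) * m = N * (m:ℝ) ^ N := by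
      have := aux_E1 V m i
      rw [hV] at this
      exact_mod_cast congrArg (Nat.cast : ℕ → ℝ) this
    have hQ : (∑ f : V → Fin m, (c f : ℝ)^2) * m^2
        = N * m * (m:ℝ)^N + N * ((N:ℝ) - 1) * (m:ℝ)^N := by
      have := aux_E2 V m i
      rw [hV] at this
      have := congrArg (Nat.cast : ℕ → ℝ) this
      push_cast [Nat.cast_sub hN] at this
      exact_mod_cast this
    have hS2 : ∑ f : V → Fin m, ((m:ℝ) * c f - N)^2
        = N * (m:ℝ) ^ (N+1) - N * (m:ℝ) ^ N := by
      have hexp : ∑ f : V → Fin m, ((m:ℝ) * c f - N)^2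
          = (m:ℝ)^2 * (∑ f : V → Fin m, (c f : ℝ)^2)
            - 2 * m * N * (∑ f : V → Fin m, (c f : ℝ)) + N^2 * (m:ℝ)^N := by
        rw [Finset.mul_sum, Finset.mul_sum, ← Finset.sum_sub_distrib]
        have : (N:ℝ)^2 * (m:ℝ)^N = ∑ _f : V → Fin m, (N:ℝ)^2 := by
          rw [Finset.sum_const, Finset.card_univ, hcard, nsmul_eq_mul]
          push_cast
          ring
        rw [this, ← Finset.sum_add_distrib]
        exact Finset.sum_congr rfl fun f _ => by ring
      have hpow1 : (m:ℝ)^(N+1) = m * (m:ℝ)^N := by ring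
      nlinarith [hA, hQ, hexp]
    set Ti : Finset (V → Fin m) :=
      Finset.univ.filter fun f : V → Fin m => ¬ ((c f : ℝ) < 2 * N / m) with hTi'
    have hterm : ∀ f ∈ Ti, (N:ℝ)^2 ≤ ((m:ℝ) * c f - N)^2 := by
      intro f hf
      have hge : 2 * (N:ℝ) / m ≤ c f := le_of_not_gt (Finset.mem_filter.mp hf).2
      have : 2 * (N:ℝ) ≤ m * c f := by
        rw [div_le_iff₀ hm0] at hge
        linarith [hge]
      have h1 : (N:ℝ) ≤ (m:ℝ) * c f - N := by linarith
      have h2 : (0:ℝ) ≤ (N:ℝ) := le_of_lt hN0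
      nlinarith
    calc (Ti.card : ℝ) * N^2 = ∑ _f ∈ Ti, (N:ℝ)^2 := by
          rw [Finset.sum_const, nsmul_eq_mul]
      _ ≤ ∑ f ∈ Ti, ((m:ℝ) * c f - N)^2 := Finset.sum_le_sum hterm
      _ ≤ ∑ f : V → Fin m, ((m:ℝ) * c f - N)^2 :=
          Finset.sum_le_sum_of_subset_of_nonneg (Finset.subset_univ Ti)
            (fun f _ _ => sq_nonneg _)
      _ = N * (m:ℝ) ^ (N+1) - N * (m:ℝ) ^ N := hS2
  -- union bound
  have hTsub : T ⊆ Finset.univ.biUnion fun i : Fin m =>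
      Finset.univ.filter fun f : V → Fin m =>
        ¬ ((Finset.univ.filter fun v => f v = i).card : ℝ) < 2 * N / m := by
    intro f hf
    have : ¬ P f := (Finset.mem_filter.mp hf).2
    simp only [hP, not_forall, not_lt] at this
    obtain ⟨i, hi⟩ := this
    exact Finset.mem_biUnion.mpr ⟨i, Finset.mem_univ i,
      Finset.mem_filter.mpr ⟨Finset.mem_univ f, not_lt.mpr hi⟩⟩
  have hTcard : (T.card : ℝ) * N^2 ≤ m * (N * (m:ℝ) ^ (N+1) - N * (m:ℝ) ^ N) := by
    have h1 : (T.card : ℕ) ≤ ∑ i : Fin m,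
        (Finset.univ.filter fun f : V → Fin m =>
          ¬ ((Finset.univ.filter fun v => f v = i).card : ℝ) < 2 * N / m).card :=
      le_trans (Finset.card_le_card hTsub) (Finset.card_biUnion_le)
    have h1' : (T.card : ℝ) ≤ ∑ i : Fin m,
        ((Finset.univ.filter fun f : V → Fin m =>
          ¬ ((Finset.univ.filter fun v => f v = i).card : ℝ) < 2 * N / m).card : ℝ) := by
      exact_mod_cast h1
    have h2 : (T.card : ℝ) * N^2 ≤ ∑ i : Fin m,
        ((Finset.univ.filter fun f : V → Fin m =>
          ¬ ((Finset.univ.filter fun v => f v = i).card : ℝ) < 2 * N / m).card : ℝ) * N^2 := by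
      rw [← Finset.sum_mul]
      exact mul_le_mul_of_nonneg_right h1' (sq_nonneg _)
    calc (T.card : ℝ) * N^2 ≤ _ := h2
      _ ≤ ∑ _i : Fin m, (N * (m:ℝ) ^ (N+1) - N * (m:ℝ) ^ N) :=
          Finset.sum_le_sum fun i _ => hTi i
      _ = m * (N * (m:ℝ) ^ (N+1) - N * (m:ℝ) ^ N) := by
          rw [Finset.sum_const, Finset.card_univ, Fintype.card_fin, nsmul_eq_mul]
  -- combine
  have hsplit : TG.card + T.card = m ^ N := by
    rw [hTG, hT, Finset.card_filter_add_card_filter_not, Finset.card_univ, hcard]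
  have hsplit' : (TG.card : ℝ) = (m:ℝ)^N - T.card := by
    have := congrArg (Nat.cast : ℕ → ℝ) hsplit
    push_cast at this
    linarith
  have hgoal2 : ((N:ℝ) - (m:ℝ)^2) / N < (TG.card : ℝ) / (m:ℝ)^N := by
    rw [div_lt_div_iff₀ hN0 hpow]
    have hp1 : (0:ℝ) < (m:ℝ)^(N+1) := pow_pos hm0 _
    have key : (T.card:ℝ) * N ≤ (m:ℝ)^(N+2) - (m:ℝ)^(N+1) := by
      have h2 : (N:ℝ) * ((T.card:ℝ) * N) ≤ (N:ℝ) * ((m:ℝ)^(N+2) - (m:ℝ)^(N+1)) := by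
        have e3 : (m:ℝ) * ((N:ℝ) * (m:ℝ)^(N+1) - (N:ℝ) * (m:ℝ)^N)
            = (N:ℝ) * ((m:ℝ)^(N+2) - (m:ℝ)^(N+1)) := by ring
        have e4 : (T.card:ℝ) * (N:ℝ)^2 = (N:ℝ) * ((T.card:ℝ) * N) := by ring
        linarith [hTcard, e3.symm ▸ hTcard]
      exact le_of_mul_le_mul_left h2 hN0
    have e4 : (TG.card:ℝ) * N = (m:ℝ)^N * N - (T.card:ℝ) * N := by rw [hsplit']; ring
    have e5 : ((N:ℝ) - (m:ℝ)^2) * (m:ℝ)^N = (m:ℝ)^N * N - (m:ℝ)^2 * (m:ℝ)^N := by ring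
    have e2 : (m:ℝ)^(N+2) = (m:ℝ)^2 * (m:ℝ)^N := by ring
    linarith [key, hp1, e4, e5, e2]
  have : (1:ℝ) - (m:ℝ)^2 / N = ((N:ℝ) - (m:ℝ)^2) / N := by
    field_simp
  rw [gt_iff_lt, this]
  exact hgoal2
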